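/- arXiv:math/0305432 — 2 statements merged into one kernel-verified Lean document; each statement's English description precedes it below -/
import Mathlib

section
/- Suppose 1 ≤ a ≤ f − g. Then the ag entries of the product matrix XY form a regular sequence in the polynomial ring R; in particular the quotient R/I is a complete intersection ring, hence Cohen–Macaulay. -/
/-!
Give the variables the weights `w(x_{il}) = 2il + f² - l²` and `w(y_{lj}) = 2lj`. Then the
`(i,j)` entry of `XY` has the single monomial `x_{i,i+j} y_{i+j,j}` as its initial form, and since
`i + j < f` these monomials have pairwise disjoint supports, so they form a regular sequence.
Regularity lifts from initial forms to the entries themselves: inductively the entries form a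
standard basis (their initial forms generate the initial ideal), so a relation `r·p ∈ (r₁, …, rₜ)`
can be pushed into the initial ideal, where the initial form of `p` is seen to be reducible
modulo `(r₁, …, rₜ)`; subtracting lowers the weighted degree of `p`.
-/

open MvPolynomial

/-- The `(i,j)` entry of the product `X·Y` of the generic `a × f` matrix `X` and the
generic `f × g` matrix `Y`, as an element of the polynomial ring
`k[x_{il}, y_{lj}]` in `af + fg` variables. -/
noncomputable def genericProdEntry (k : Type*) [CommSemiring k] (a f g : ℕ)
    (i : Fin a) (j : Fin g) : MvPolynomial ((Fin a × Fin f) ⊕ (Fin f × Fin g)) k :=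
  ∑ l : Fin f, X (Sum.inl (i, l)) * X (Sum.inr (l, j))

open Finsupp

theorem Ideal.ofList_map_eq_span_image {A B : Type*} [CommSemiring B] (f : A → B) (L : List A) :
    Ideal.ofList (L.map f) = Ideal.span (f '' {a | a ∈ L}) := by
  unfold Ideal.ofList
  congr 1
  ext
  simp

namespace RingTheory.Sequence

theorem isWeaklyRegular_append_singleton_iff {A : Type*} [CommRing A] (rs : List A) (r : A) :
    IsWeaklyRegular A (rs ++ [r]) ↔
      IsWeaklyRegular A rs ∧ ∀ x, r * x ∈ Ideal.ofList rs → x ∈ Ideal.ofList rs := by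
  rw [isWeaklyRegular_append_iff, isWeaklyRegular_singleton_iff, smul_eq_mul, Ideal.mul_top,
    isSMulRegular_quotient_iff_mem_of_smul_mem]
  rfl

end RingTheory.Sequence

namespace MvPolynomial

open RingTheory.Sequence

variable {σ R : Type*} [CommRing R] (w : σ → ℕ)

noncomputable def initialForm (p : MvPolynomial σ R) : MvPolynomial σ R :=
  weightedHomogeneousComponent w (p.weightedTotalDegree w) p

variable {w}

theorem isWeightedHomogeneous_initialForm (p : MvPolynomial σ R) :
    IsWeightedHomogeneous w (initialForm w p) (p.weightedTotalDegree w) :=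
  weightedHomogeneousComponent_isWeightedHomogeneous _ _

@[simp]
theorem initialForm_zero : initialForm w (0 : MvPolynomial σ R) = 0 :=
  map_zero _

theorem initialForm_ne_zero {p : MvPolynomial σ R} (hp : p ≠ 0) : initialForm w p ≠ 0 := by
  classical
  obtain ⟨d, hd, hdeg⟩ := Finset.exists_mem_eq_sup _ (support_nonempty.mpr hp) (weight w)
  refine ne_zero_iff.mpr ⟨d, ?_⟩
  rw [initialForm, coeff_weightedHomogeneousComponent,
    if_pos (show weight w d = p.weightedTotalDegree w from hdeg.symm)]
  exact mem_support_iff.mp hd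

theorem IsWeightedHomogeneous.weightedTotalDegree_le {φ : MvPolynomial σ R} {n : ℕ}
    (hφ : IsWeightedHomogeneous w φ n) : φ.weightedTotalDegree w ≤ n :=
  Finset.sup_le fun _ hd => (hφ (mem_support_iff.mp hd)).le

theorem mem_restrictSupport_weight_lt {p : MvPolynomial σ R} {n : ℕ}
    (hp : p.weightedTotalDegree w < n) : p ∈ restrictSupport R {d | weight w d < n} :=
  (mem_restrictSupport_iff R).mpr fun _ hd => (le_weightedTotalDegree w hd).trans_lt hp

theorem sub_initialForm_mem (p : MvPolynomial σ R) :
    p - initialForm w p ∈ restrictSupport R {d | weight w d < p.weightedTotalDegree w} := by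
  classical
  refine (mem_restrictSupport_iff R).mpr fun d hd => ?_
  have hcoeff := mem_support_iff.mp hd
  rw [coeff_sub, initialForm, coeff_weightedHomogeneousComponent] at hcoeff
  split_ifs at hcoeff with hdeg
  · exact absurd (sub_self _) hcoeff
  · exact (le_weightedTotalDegree w (mem_support_iff.mpr (by simpa using hcoeff))).lt_of_ne hdeg

theorem mul_mem_restrictSupport_weight_lt {p q : MvPolynomial σ R} {m n : ℕ}
    (hp : p.weightedTotalDegree w ≤ m) (hq : q ∈ restrictSupport R {d | weight w d < n}) :
    p * q ∈ restrictSupport R {d | weight w d < m + n} := by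
  classical
  refine (mem_restrictSupport_iff R).mpr fun d hd => ?_
  obtain ⟨u, hu, v, hv, rfl⟩ := Finset.mem_add.mp (support_mul p q hd)
  simpa only [Set.mem_ofPred_eq, map_add] using
    add_lt_add_of_le_of_lt ((le_weightedTotalDegree w hu).trans hp)
      ((mem_restrictSupport_iff R).mp hq hv)

theorem initialForm_add_eq {φ p : MvPolynomial σ R} {n : ℕ} (hφ : IsWeightedHomogeneous w φ n)
    (hφ0 : φ ≠ 0) (hp : p ∈ restrictSupport R {d | weight w d < n}) :
    initialForm w (φ + p) = φ := by
  classical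
  have hcomp : weightedHomogeneousComponent w n (φ + p) = φ := by
    rw [map_add, hφ.weightedHomogeneousComponent_same,
      weightedHomogeneousComponent_eq_zero' _ _ fun d hd =>
        ((mem_restrictSupport_iff R).mp hp hd).ne, add_zero]
  have hle : (φ + p).weightedTotalDegree w ≤ n := by
    refine Finset.sup_le fun d hd => ?_
    rcases Finset.mem_union.mp (support_add hd) with hd | hd
    · exact (hφ (mem_support_iff.mp hd)).le
    · exact ((mem_restrictSupport_iff R).mp hp hd).le
  have hdeg : (φ + p).weightedTotalDegree w = n := by
    refine hle.antisymm (not_lt.mp fun hlt => hφ0 ?_)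
    rw [← hcomp, weightedHomogeneousComponent_eq_zero _ _ hlt]
  rw [initialForm, hdeg, hcomp]

theorem IsWeightedHomogeneous.initialForm_eq {φ : MvPolynomial σ R} {n : ℕ}
    (hφ : IsWeightedHomogeneous w φ n) : initialForm w φ = φ := by
  rcases eq_or_ne φ 0 with rfl | hφ0
  · exact initialForm_zero
  · simpa using initialForm_add_eq hφ hφ0 (zero_mem _)

theorem initialForm_mul [IsDomain R] (p q : MvPolynomial σ R) :
    initialForm w (p * q) = initialForm w p * initialForm w q := by
  rcases eq_or_ne p 0 with rfl | hp
  · simp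
  rcases eq_or_ne q 0 with rfl | hq
  · simp
  set P := initialForm w p
  set Q := initialForm w q
  have hlow : P * (q - Q) + q * (p - P) ∈ restrictSupport R
      {d | weight w d < p.weightedTotalDegree w + q.weightedTotalDegree w} := by
    refine add_mem (mul_mem_restrictSupport_weight_lt ?_ (sub_initialForm_mem q)) ?_
    · exact (isWeightedHomogeneous_initialForm p).weightedTotalDegree_le
    · rw [add_comm]
      exact mul_mem_restrictSupport_weight_lt le_rfl (sub_initialForm_mem p)
  have hPQ := initialForm_add_eq ((isWeightedHomogeneous_initialForm p).mul
    (isWeightedHomogeneous_initialForm q)) (mul_ne_zero (initialForm_ne_zero hp)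
    (initialForm_ne_zero hq)) hlow
  rwa [show P * Q + (P * (q - Q) + q * (p - P)) = p * q by ring] at hPQ

theorem initialForm_add_mem_or {K : Ideal (MvPolynomial σ R)} {p q : MvPolynomial σ R}
    (hp : initialForm w p ∈ K) (hq : initialForm w q ∈ K) :
    initialForm w (p + q) ∈ K ∨ initialForm w p + initialForm w q = 0 := by
  have key : ∀ {p q : MvPolynomial σ R}, p.weightedTotalDegree w < q.weightedTotalDegree w →
      initialForm w (p + q) = initialForm w q := fun {p q} hlt => by
    have hq0 : q ≠ 0 := by rintro rfl; simp [weightedTotalDegree_zero] at hlt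
    have := initialForm_add_eq (isWeightedHomogeneous_initialForm q) (initialForm_ne_zero hq0)
      (add_mem (sub_initialForm_mem q) (mem_restrictSupport_weight_lt hlt))
    rwa [show initialForm w q + (q - initialForm w q + p) = p + q by ring] at this
  rcases lt_trichotomy (p.weightedTotalDegree w) (q.weightedTotalDegree w) with hlt | heq | hgt
  · exact .inl (key hlt ▸ hq)
  · rcases eq_or_ne (initialForm w p + initialForm w q) 0 with h0 | h0
    · exact .inr h0
    refine .inl ?_
    have hhom := (isWeightedHomogeneous_initialForm p).add
      (heq ▸ isWeightedHomogeneous_initialForm q)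
    have := initialForm_add_eq hhom h0 (add_mem (sub_initialForm_mem p)
      (heq ▸ sub_initialForm_mem q))
    rw [show initialForm w p + initialForm w q + (p - initialForm w p + (q - initialForm w q))
      = p + q by ring] at this
    exact this ▸ add_mem hp hq
  · exact .inl (add_comm q p ▸ key hgt ▸ hp)

attribute [local instance] weightedGradedAlgebra in
theorem weightedHomogeneousComponent_mul_of_isWeightedHomogeneous {T : MvPolynomial σ R} {m : ℕ}
    (hT : IsWeightedHomogeneous w T m) (c : MvPolynomial σ R) (n : ℕ) :
    weightedHomogeneousComponent w n (c * T) =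
      if m ≤ n then weightedHomogeneousComponent w (n - m) c * T else 0 := by
  classical
  rw [← weightedDecomposition.decompose'_apply R w, ← weightedDecomposition.decompose'_apply R w]
  exact DirectSum.coe_decompose_mul_of_right_mem _ n (hT : T ∈ weightedHomogeneousSubmodule R w m)

theorem weightedTotalDegree_lt_of_mem_restrictSupport {p : MvPolynomial σ R} {n : ℕ}
    (hp0 : p ≠ 0) (hp : p ∈ restrictSupport R {d | weight w d < n}) :
    p.weightedTotalDegree w < n := by
  obtain ⟨d, hd⟩ := support_nonempty.mpr hp0
  exact (Finset.sup_lt_iff ((Nat.zero_le _).trans_lt ((mem_restrictSupport_iff R).mp hp hd))).mpr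
    fun _ he => (mem_restrictSupport_iff R).mp hp he

theorem induction_on_weight_lt {P : MvPolynomial σ R → Prop} (zero : P 0)
    (step : ∀ p, (∀ q ∈ restrictSupport R {d | weight w d < p.weightedTotalDegree w}, P q) → P p)
    (p : MvPolynomial σ R) : P p := by
  induction hn : p.weightedTotalDegree w using Nat.strong_induction_on generalizing p with
  | _ n ih =>
  refine step p fun q hq => ?_
  rcases eq_or_ne q 0 with rfl | hq0
  · exact zero
  · exact ih _ (hn ▸ weightedTotalDegree_lt_of_mem_restrictSupport hq0 hq) q rfl

theorem exists_sub_mem_restrictSupport_of_initialForm_mem_span {S : Set (MvPolynomial σ R)}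
    {p : MvPolynomial σ R} (hp : initialForm w p ∈ Ideal.span (initialForm w '' S)) :
    ∃ q ∈ Ideal.span S, p - q ∈ restrictSupport R {d | weight w d < p.weightedTotalDegree w} := by
  classical
  set D := p.weightedTotalDegree w
  obtain ⟨t, htS, c, hc⟩ := (Submodule.mem_span_image_iff_exists_fun _).mp hp
  -- the degree-`D` part of `∑ c s * in(s) = in(p)` has homogeneous coefficients `c' s`
  let c' : t → MvPolynomial σ R := fun s =>
    if (s : MvPolynomial σ R).weightedTotalDegree w ≤ D then
      weightedHomogeneousComponent w (D - (s : MvPolynomial σ R).weightedTotalDegree w) (c s)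
    else 0
  have hdecomp : initialForm w p = ∑ s, c' s * initialForm w s := by
    rw [← (isWeightedHomogeneous_initialForm p).weightedHomogeneousComponent_same, ← hc, map_sum]
    refine Finset.sum_congr rfl fun s _ => ?_
    rw [smul_eq_mul, weightedHomogeneousComponent_mul_of_isWeightedHomogeneous
      (isWeightedHomogeneous_initialForm _)]
    simp only [c', ite_mul, zero_mul]
    rfl
  refine ⟨∑ s, c' s * s, sum_mem fun s _ => Ideal.mul_mem_left _ _ (Ideal.subset_span (htS s.2)),
    ?_⟩
  rw [show p - ∑ s, c' s * s =
      p - initialForm w p - ∑ s, c' s * ((s : MvPolynomial σ R) - initialForm w s) by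
    rw [hdecomp]; simp only [mul_sub, Finset.sum_sub_distrib]; ring]
  refine sub_mem (sub_initialForm_mem p) (sum_mem fun s _ => ?_)
  by_cases hs : (s : MvPolynomial σ R).weightedTotalDegree w ≤ D
  · have := mul_mem_restrictSupport_weight_lt
      (weightedHomogeneousComponent_isWeightedHomogeneous (w := w)
        (D - (s : MvPolynomial σ R).weightedTotalDegree w) (c s)).weightedTotalDegree_le
      (sub_initialForm_mem (w := w) (s : MvPolynomial σ R))
    simpa only [c', if_pos hs, Nat.sub_add_cancel hs] using this
  · simp [c', hs]

variable (w) in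
def IsWeightedStandardBasis (S : Set (MvPolynomial σ R)) : Prop :=
  ∀ p ∈ Ideal.span S, initialForm w p ∈ Ideal.span (initialForm w '' S)

theorem isWeightedStandardBasis_empty :
    IsWeightedStandardBasis w (∅ : Set (MvPolynomial σ R)) := by
  intro p hp
  rw [Ideal.span_empty, Ideal.mem_bot] at hp
  simp [hp]

section IsDomain

variable [IsDomain R] {S : Set (MvPolynomial σ R)} {r : MvPolynomial σ R}
  {L : List (MvPolynomial σ R)}

theorem IsWeightedStandardBasis.mem_of_mul_mem (hS : IsWeightedStandardBasis w S)
    (hr : ∀ x, initialForm w r * x ∈ Ideal.span (initialForm w '' S) →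
      x ∈ Ideal.span (initialForm w '' S))
    (p : MvPolynomial σ R) : r * p ∈ Ideal.span S → p ∈ Ideal.span S := by
  induction p using induction_on_weight_lt (w := w) with
  | zero => exact fun _ => zero_mem _
  | step p ih =>
    intro hp
    obtain ⟨q, hq, hlow⟩ := exists_sub_mem_restrictSupport_of_initialForm_mem_span
      (hr _ (initialForm_mul r p ▸ hS _ hp))
    have hpq := ih _ hlow (by rw [mul_sub]; exact sub_mem hp (Ideal.mul_mem_left _ _ hq))
    simpa using add_mem hpq hq

theorem isWeightedStandardBasis_insert (hS : IsWeightedStandardBasis w S)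
    (hr : ∀ x, initialForm w r * x ∈ Ideal.span (initialForm w '' S) →
      x ∈ Ideal.span (initialForm w '' S)) :
    IsWeightedStandardBasis w (insert r S) := by
  have hmono : Ideal.span (initialForm w '' S) ≤ Ideal.span (initialForm w '' insert r S) :=
    Ideal.span_mono (Set.image_mono (Set.subset_insert r S))
  have hr_mem : initialForm w r ∈ Ideal.span (initialForm w '' insert r S) :=
    Ideal.subset_span ⟨r, Set.mem_insert r S, rfl⟩
  intro v hv
  obtain ⟨p, u, hu, rfl⟩ := Submodule.mem_span_insert.mp hv
  clear hv
  induction p using induction_on_weight_lt (w := w) generalizing u with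
  | zero => simpa using hmono (hS u hu)
  | step p ih =>
    have hpr : initialForm w (p * r) ∈ Ideal.span (initialForm w '' insert r S) := by
      rw [initialForm_mul]
      exact Ideal.mul_mem_left _ _ hr_mem
    rcases initialForm_add_mem_or hpr (hmono (hS u hu)) with h | hcancel
    · exact h
    -- the initial forms of `p * r` and `u` cancel: reduce `p` modulo `S` and recurse
    have hcolon : initialForm w r * initialForm w p ∈ Ideal.span (initialForm w '' S) := by
      rw [mul_comm, ← initialForm_mul, eq_neg_of_add_eq_zero_left hcancel, neg_mem_iff]
      exact hS u hu
    obtain ⟨q, hq, hlow⟩ := exists_sub_mem_restrictSupport_of_initialForm_mem_span (hr _ hcolon)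
    have := ih _ hlow (q * r + u) (add_mem (Ideal.mul_mem_right _ _ hq) hu)
    rwa [show (p - q) • r + (q * r + u) = p • r + u by simp only [smul_eq_mul]; ring] at this

theorem isWeightedStandardBasis_of_isWeaklyRegular_map_initialForm
    (hL : IsWeaklyRegular (MvPolynomial σ R) (L.map (initialForm w))) :
    IsWeightedStandardBasis w {p | p ∈ L} := by
  induction L using List.reverseRecOn with
  | nil => simpa using isWeightedStandardBasis_empty
  | append_singleton L r ih =>
    rw [List.map_append, List.map_singleton, isWeaklyRegular_append_singleton_iff,
      Ideal.ofList_map_eq_span_image] at hL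
    rw [show {p | p ∈ L ++ [r]} = insert r {p | p ∈ L} by ext; simp [or_comm]]
    exact isWeightedStandardBasis_insert (ih hL.1) hL.2

theorem isWeaklyRegular_of_isWeaklyRegular_map_initialForm
    (hL : IsWeaklyRegular (MvPolynomial σ R) (L.map (initialForm w))) :
    IsWeaklyRegular (MvPolynomial σ R) L := by
  induction L using List.reverseRecOn with
  | nil => exact .nil _ _
  | append_singleton L r ih =>
    rw [List.map_append, List.map_singleton, isWeaklyRegular_append_singleton_iff,
      Ideal.ofList_map_eq_span_image] at hL
    rw [isWeaklyRegular_append_singleton_iff]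
    exact ⟨ih hL.1,
      (isWeightedStandardBasis_of_isWeaklyRegular_map_initialForm hL.1).mem_of_mul_mem hL.2⟩

theorem isRegular_of_isRegular_map_initialForm
    (hL : IsRegular (MvPolynomial σ R) (L.map (initialForm w))) :
    IsRegular (MvPolynomial σ R) L := by
  refine ⟨isWeaklyRegular_of_isWeaklyRegular_map_initialForm hL.1, fun htop => hL.2 ?_⟩
  rw [smul_eq_mul, Ideal.mul_top, eq_comm, Ideal.eq_top_iff_one] at htop ⊢
  have := isWeightedStandardBasis_of_isWeaklyRegular_map_initialForm hL.1 1 htop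
  rwa [(isWeightedHomogeneous_one (R := R) w).initialForm_eq,
    ← Ideal.ofList_map_eq_span_image] at this

end IsDomain

theorem mem_span_monomial_of_monomial_mul_mem {E : Set (σ →₀ ℕ)} {e : σ →₀ ℕ}
    (hE : ∀ d ∈ E, Disjoint d.support e.support) {u : MvPolynomial σ R}
    (hu : monomial e 1 * u ∈ Ideal.span ((monomial · (1 : R)) '' E)) :
    u ∈ Ideal.span ((monomial · (1 : R)) '' E) := by
  classical
  rw [mem_ideal_span_monomial_image] at hu ⊢
  intro d hd
  obtain ⟨d', hd'E, hle⟩ := hu (e + d) (by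
    rwa [mem_support_iff, coeff_monomial_mul', if_pos le_self_add, add_tsub_cancel_left, one_mul,
      ← mem_support_iff])
  refine ⟨d', hd'E, fun v => ?_⟩
  by_cases hv : d' v = 0
  · simp [hv]
  have hev : e v = 0 := Finsupp.notMem_support_iff.mp
    (Finset.disjoint_left.mp (hE d' hd'E) (Finsupp.mem_support_iff.mpr hv))
  simpa [hev] using hle v

theorem isWeaklyRegular_map_monomial {L : List (σ →₀ ℕ)}
    (hL : L.Pairwise fun d e => Disjoint d.support e.support) :
    IsWeaklyRegular (MvPolynomial σ R) (L.map (monomial · (1 : R))) := by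
  induction L using List.reverseRecOn with
  | nil => exact .nil _ _
  | append_singleton L e ih =>
    rw [List.pairwise_append] at hL
    rw [List.map_append, List.map_singleton, isWeaklyRegular_append_singleton_iff,
      Ideal.ofList_map_eq_span_image]
    exact ⟨ih hL.1, fun u hu => mem_span_monomial_of_monomial_mul_mem
      (fun d hd => hL.2.2 d hd e (List.mem_singleton_self e)) hu⟩

theorem isRegular_map_monomial [Nontrivial R] {L : List (σ →₀ ℕ)}
    (hL : L.Pairwise fun d e => Disjoint d.support e.support) (h0 : 0 ∉ L) :
    IsRegular (MvPolynomial σ R) (L.map (monomial · (1 : R))) := by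
  refine ⟨isWeaklyRegular_map_monomial hL, fun htop => ?_⟩
  rw [smul_eq_mul, Ideal.mul_top, eq_comm, Ideal.eq_top_iff_one, Ideal.ofList_map_eq_span_image,
    mem_ideal_span_monomial_image] at htop
  obtain ⟨d, hdL, hd⟩ := htop 0 (by simp)
  exact h0 (le_zero_iff.mp hd ▸ hdL)

end MvPolynomial

section GenericProduct

variable {a f g : ℕ}

/-- With this weight, `x_{il}` and `y_{lj}` together weigh `f² + (i + j)² - (l - i - j)²`. -/
def genericProdWeight (a f g : ℕ) : (Fin a × Fin f) ⊕ (Fin f × Fin g) → ℕ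
  | .inl (i, l) => 2 * i * l + (f * f - l * l)
  | .inr (l, j) => 2 * l * j

noncomputable def genericProdExponent (i : Fin a) (l : Fin f) (j : Fin g) :
    (Fin a × Fin f) ⊕ (Fin f × Fin g) →₀ ℕ :=
  single (.inl (i, l)) 1 + single (.inr (l, j)) 1

theorem genericProdEntry_eq_sum_monomial (k : Type*) [CommSemiring k] (i : Fin a) (j : Fin g) :
    genericProdEntry k a f g i j = ∑ l, monomial (genericProdExponent i l j) 1 := by
  simp only [genericProdEntry, genericProdExponent, X, monomial_mul, mul_one]

theorem weight_genericProdExponent_lt {i : Fin a} {j : Fin g} {l m : Fin f}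
    (hm : (m : ℕ) = i + j) (hl : l ≠ m) :
    weight (genericProdWeight a f g) (genericProdExponent i l j) <
      weight (genericProdWeight a f g) (genericProdExponent i m j) := by
  have hsq : 0 < ((l : ℤ) - m) ^ 2 :=
    sq_pos_iff.mpr (sub_ne_zero.mpr (by exact_mod_cast Fin.val_injective.ne hl))
  simp only [genericProdExponent, map_add, weight_single, genericProdWeight, one_smul]
  have hlf : (l : ℕ) * l ≤ f * f := Nat.mul_le_mul l.2.le l.2.le
  have hmf : (m : ℕ) * m ≤ f * f := Nat.mul_le_mul m.2.le m.2.le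
  zify [hlf, hmf]
  push_cast [hm] at hsq ⊢
  nlinarith

theorem initialForm_genericProdEntry (k : Type*) [CommRing k] [Nontrivial k] (i : Fin a) (j : Fin g)
    (m : Fin f) (hm : (m : ℕ) = i + j) :
    initialForm (genericProdWeight a f g) (genericProdEntry k a f g i j) =
      monomial (genericProdExponent i m j) 1 := by
  classical
  rw [genericProdEntry_eq_sum_monomial, ← Finset.add_sum_erase _ _ (Finset.mem_univ m)]
  refine initialForm_add_eq (isWeightedHomogeneous_monomial _ _ _ rfl)
    (monomial_eq_zero.not.mpr one_ne_zero) (sum_mem fun l hl => ?_)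
  exact (monomial_mem_restrictSupport _).mpr
    (.inl (weight_genericProdExponent_lt hm (Finset.ne_of_mem_erase hl)))

theorem genericProdExponent_ne_zero (i : Fin a) (l : Fin f) (j : Fin g) :
    genericProdExponent i l j ≠ 0 := fun h => by
  simpa [genericProdExponent] using DFunLike.congr_fun h (.inl (i, l))

theorem disjoint_support_genericProdExponent {i i' : Fin a} {l l' : Fin f} {j j' : Fin g}
    (hl : (l : ℕ) = i + j) (hl' : (l' : ℕ) = i' + j') (hne : (i, j) ≠ (i', j')) :
    Disjoint (genericProdExponent i l j).support (genericProdExponent i' l' j').support := by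
  classical
  rw [genericProdExponent, genericProdExponent,
    support_single_add_single (by simp) one_ne_zero one_ne_zero,
    support_single_add_single (by simp) one_ne_zero one_ne_zero]
  simp [Fin.ext_iff] at hne ⊢
  omega

end GenericProduct

theorem genericProdEntries_isRegularSequence_general
    (k : Type*) [Field k] (a f g : ℕ) (hafg : a + g ≤ f) :
    RingTheory.Sequence.IsRegular (MvPolynomial ((Fin a × Fin f) ⊕ (Fin f × Fin g)) k)
      (List.ofFn fun t : Fin (a * g) =>
        genericProdEntry k a f g (finProdFinEquiv.symm t).1 (finProdFinEquiv.symm t).2) := by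
  have hdiag : ∀ (i : Fin a) (j : Fin g), (i : ℕ) + j < f := fun i j => by omega
  let e (t : Fin (a * g)) := genericProdExponent (finProdFinEquiv.symm t).1
    ⟨_, hdiag (finProdFinEquiv.symm t).1 (finProdFinEquiv.symm t).2⟩ (finProdFinEquiv.symm t).2
  refine isRegular_of_isRegular_map_initialForm (w := genericProdWeight a f g) ?_
  rw [List.map_ofFn]
  have hinit : initialForm (genericProdWeight a f g) ∘ _ = (monomial · (1 : k)) ∘ e :=
    funext fun t => initialForm_genericProdEntry k _ _ _ rfl
  rw [hinit, ← List.map_ofFn]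
  refine isRegular_map_monomial ?_ ?_
  · exact List.pairwise_ofFn.mpr fun s t hst => disjoint_support_genericProdExponent rfl rfl
      (finProdFinEquiv.symm.injective.ne hst.ne)
  · simp [List.mem_ofFn, e, genericProdExponent_ne_zero]

/-- If `1 ≤ a ≤ f − g`, then the `ag` entries of the generic matrix product `X·Y` form a
regular sequence in the polynomial ring `R = k[x_{il}, y_{lj}]`; in particular the
quotient by the ideal they generate is a complete intersection ring. -/
theorem genericProdEntries_isRegularSequence
    (k : Type*) [Field k] (a f g : ℕ) (ha : 0 < a) (hg : 0 < g) (hafg : a + g ≤ f) :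
    RingTheory.Sequence.IsRegular (MvPolynomial ((Fin a × Fin f) ⊕ (Fin f × Fin g)) k)
      (List.ofFn fun t : Fin (a * g) =>
        genericProdEntry k a f g (finProdFinEquiv.symm t).1 (finProdFinEquiv.symm t).2) :=
  genericProdEntries_isRegularSequence_general k a f g hafg
end

section
/- Let Γ = ⟨φ⟩ be a cyclic group of order r, let Δ ⊆ Γ be the subgroup of index s (so s divides r and Δ = ⟨φ^s⟩), and let V be a finite-dimensional k-representation of Δ. Then the Reid–Shepherd-Barron–Tai invariants of V and of its induced Γ-representation satisfy α_γ(V ⊗_{k[Δ]} k[Γ]) = α_{γ|_Δ}(V) + ((s − 1)/2)·dim_k V. -/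
/-!
An eigenvector of the induced action with eigenvalue `μ ≠ 0` is determined by its `0`-th
component, which is an eigenvector of `S` with eigenvalue `μ ^ s`; so the multiplicity `a_i` of
`ζ ^ i` in the induced representation is the multiplicity `b_i` of `(ζ ^ s) ^ i` in `V`, which
is periodic in `i` with period `r / s`. As `S ^ (r / s) = 1` and `ζ ^ s` is a primitive
`(r / s)`-th root of unity, `S` is diagonalizable and `∑_{j < r/s} b_j = dim V`. Splitting
`i = t * (r / s) + j` with `t < s` then gives
`∑_{i < r} i * a_i = s * ∑_{j < r/s} j * b_j + (r / s) * (s * (s - 1) / 2) * dim V`.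
-/

/-- The Reid–Shepherd-Barron–Tai invariant (with respect to the character sending the
chosen generator to `ζ`) of a representation of the cyclic group of order `r`, given by
the action `T` of the chosen generator: `α = (1/r)·Σ_{i=0}^{r−1} i·a_i`, where
`a_i = dim ker(T − ζ^i·id)` is the multiplicity of the character `ζ^i`. -/
noncomputable def rstInvariant {k M : Type*} [Field k] [AddCommGroup M] [Module k M]
    (r : ℕ) (ζ : k) (T : M →ₗ[k] M) : ℚ :=
  (∑ i ∈ Finset.range r, (i : ℚ) *
      (Module.finrank k (LinearMap.ker (T - ζ ^ i • LinearMap.id)) : ℚ)) / r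

/-- The action of the chosen generator `φ` of the cyclic group `Γ = ⟨φ⟩` of order `r` on
the representation induced from a representation `(V, S)` of the index-`s` subgroup
`Δ = ⟨φ^s⟩` (where `S` is the action of `φ^s`), in the standard model
`V ⊗_{k[Δ]} k[Γ] ≅ ⊕_{i=0}^{s−1} V·φ^i`. -/
noncomputable def inducedGenAction {k V : Type*} [Field k] [AddCommGroup V] [Module k V]
    (s : ℕ) [NeZero s] (S : V →ₗ[k] V) : (Fin s → V) →ₗ[k] (Fin s → V) where
  toFun v j := if j = 0 then S (v (j - 1)) else v (j - 1)
  map_add' u v := by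
    funext j; by_cases h : j = 0 <;> simp [h]
  map_smul' t v := by
    funext j; by_cases h : j = 0 <;> simp [h]

open Module Module.End Finset

section InducedGenAction

variable {k V : Type*} [Field k] [AddCommGroup V] [Module k V] {n : ℕ} (S : V →ₗ[k] V)

lemma inducedGenAction_apply_zero (v : Fin (n + 1) → V) :
    inducedGenAction (n + 1) S v 0 = S (v (Fin.last n)) := by
  have : (0 : Fin (n + 1)) - 1 = Fin.last n := Fin.ext <| by simp
  simp [inducedGenAction, this]

lemma inducedGenAction_apply_succ (v : Fin (n + 1) → V) (i : Fin n) :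
    inducedGenAction (n + 1) S v i.succ = v i.castSucc := by
  have : i.succ - 1 = i.castSucc := Fin.ext <| by simp [Fin.coe_sub_one, Fin.succ_ne_zero]
  simp [inducedGenAction, Fin.succ_ne_zero, this]

lemma pow_smul_apply_eq_of_mem_eigenspace_inducedGenAction {μ : k} {v : Fin (n + 1) → V}
    (hv : v ∈ eigenspace (inducedGenAction (n + 1) S) μ) (j : Fin (n + 1)) :
    μ ^ (j : ℕ) • v j = v 0 := by
  induction j using Fin.induction with
  | zero => simp
  | succ i ih =>
    have hi := congr_fun (mem_eigenspace_iff.1 hv) i.succ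
    rw [inducedGenAction_apply_succ, Pi.smul_apply] at hi
    rw [Fin.val_succ, pow_succ, mul_smul, ← hi, ← ih, Fin.val_castSucc]

lemma apply_zero_mem_eigenspace_of_mem_eigenspace_inducedGenAction {μ : k}
    {v : Fin (n + 1) → V} (hv : v ∈ eigenspace (inducedGenAction (n + 1) S) μ) :
    v 0 ∈ eigenspace S (μ ^ (n + 1)) := by
  have h0 := congr_fun (mem_eigenspace_iff.1 hv) 0
  rw [inducedGenAction_apply_zero, Pi.smul_apply] at h0
  rw [mem_eigenspace_iff]
  calc S (v 0) = S (μ ^ n • v (Fin.last n)) := by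
        rw [← pow_smul_apply_eq_of_mem_eigenspace_inducedGenAction S hv, Fin.val_last]
    _ = μ ^ (n + 1) • v 0 := by rw [map_smul, h0, smul_smul, pow_succ]

lemma geometric_mem_eigenspace_inducedGenAction {μ : k} (hμ : μ ≠ 0) {w : V}
    (hw : w ∈ eigenspace S (μ ^ (n + 1))) :
    (fun j : Fin (n + 1) ↦ μ⁻¹ ^ (j : ℕ) • w) ∈ eigenspace (inducedGenAction (n + 1) S) μ := by
  rw [mem_eigenspace_iff]
  funext j
  cases j using Fin.cases with
  | zero =>
    rw [inducedGenAction_apply_zero, map_smul, mem_eigenspace_iff.1 hw, Pi.smul_apply, smul_smul,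
      smul_smul, Fin.val_last, Fin.val_zero, pow_zero, mul_one, pow_succ', inv_pow]
    field_simp
  | succ i =>
    rw [inducedGenAction_apply_succ, Pi.smul_apply, smul_smul, Fin.val_succ, Fin.val_castSucc, pow_succ, mul_left_comm, mul_inv_cancel₀ hμ, mul_one]

noncomputable def eigenspaceInducedGenActionEquiv {μ : k} (hμ : μ ≠ 0) :
    eigenspace (inducedGenAction (n + 1) S) μ ≃ₗ[k] eigenspace S (μ ^ (n + 1)) where
  toFun v := ⟨v.1 0, apply_zero_mem_eigenspace_of_mem_eigenspace_inducedGenAction S v.2⟩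
  invFun w := ⟨_, geometric_mem_eigenspace_inducedGenAction S hμ w.2⟩
  map_add' _ _ := rfl
  map_smul' _ _ := rfl
  left_inv v := Subtype.ext <| funext fun j ↦ by
    simp [← pow_smul_apply_eq_of_mem_eigenspace_inducedGenAction S v.2 j, smul_smul,
      inv_mul_cancel₀ (pow_ne_zero _ hμ)]
  right_inv w := Subtype.ext <| by simp

lemma finrank_eigenspace_inducedGenAction (s : ℕ) [NeZero s] {μ : k} (hμ : μ ≠ 0) :
    finrank k (eigenspace (inducedGenAction s S) μ) = finrank k (eigenspace S (μ ^ s)) := by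
  obtain ⟨n, rfl⟩ := Nat.exists_eq_succ_of_ne_zero (NeZero.ne s)
  exact (eigenspaceInducedGenActionEquiv S hμ).finrank_eq

end InducedGenAction

section FiniteOrder

variable {k V : Type*} [Field k] [AddCommGroup V] [Module k V] {f : End k V} {m : ℕ}

lemma Module.End.HasEigenvalue.pow_eq_one {μ : k} (hμ : f.HasEigenvalue μ) (hf : f ^ m = 1) :
    μ ^ m = 1 := by
  obtain ⟨x, hx⟩ := hμ.exists_hasEigenvector
  have := hx.pow_apply m
  rw [hf, one_apply] at this
  exact smul_left_injective k hx.2 (by simpa using this.symm)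

lemma Module.End.sum_finrank_eigenspace_pow_eq_finrank [IsAlgClosed k] [FiniteDimensional k V]
    [NeZero m] {ξ : k} (hξ : IsPrimitiveRoot ξ m) (hf : f ^ m = 1) :
    ∑ j ∈ range m, finrank k (f.eigenspace (ξ ^ j)) = finrank k V := by
  have hsemisimple : f.IsSemisimple := by
    refine isSemisimple_of_squarefree_aeval_eq_zero
      (Polynomial.separable_X_pow_sub_C 1 hξ.neZero'.out one_ne_zero).squarefree ?_
    simp [hf]
  let p : Fin m → Submodule k V := fun j ↦ f.eigenspace (ξ ^ (j : ℕ))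
  have hindep : iSupIndep p :=
    f.eigenspaces_iSupIndep.comp fun a b hab ↦ Fin.ext (hξ.pow_inj a.2 b.2 hab)
  have hsup : ⨆ j, p j = ⊤ := by
    refine top_unique (hsemisimple.iSup_eigenspace_eq_top ▸ iSup_le fun μ ↦ ?_)
    by_cases hμ : f.HasEigenvalue μ
    · obtain ⟨j, hj, rfl⟩ := hξ.eq_pow_of_pow_eq_one (hμ.pow_eq_one hf)
      exact le_iSup p ⟨j, hj⟩
    · exact (not_ne_iff.1 hμ).le.trans bot_le
  classical
  rw [← (LinearEquiv.ofBijective (DirectSum.coeLinearMap p)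
    (DirectSum.isInternal_submodule_of_iSupIndep_of_iSup_eq_top hindep hsup)).finrank_eq,
    finrank_directSum, sum_range]

end FiniteOrder

lemma sum_range_mul_natCast_mul_of_periodic {R : Type*} [CommSemiring R] {b : ℕ → R} {m : ℕ}
    (hb : Function.Periodic b m) (s : ℕ) :
    ∑ i ∈ range (s * m), (i : R) * b i
      = s * ∑ j ∈ range m, (j : R) * b j + m * (∑ t ∈ range s, (t : R)) * ∑ j ∈ range m, b j := by
  induction s with
  | zero => simp
  | succ s ih =>
    have hshift (j : ℕ) : ((s * m + j : ℕ) : R) * b (s * m + j) = s * m * b j + j * b j := by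
      rw [add_comm (s * m), ← Nat.cast_id s, hb.nat_mul s j]
      push_cast
      ring
    simp only [Nat.succ_mul, sum_range_add, ih, hshift, sum_add_distrib, ← mul_sum,
      sum_range_succ]
    push_cast
    ring

lemma sum_range_natCast_eq (n : ℕ) : ∑ i ∈ range n, (i : ℚ) = n * (n - 1) / 2 := by
  induction n with
  | zero => simp
  | succ n ih =>
    rw [sum_range_succ, ih]
    push_cast
    ring

lemma rstInvariant_eq_sum_finrank_eigenspace {k M : Type*} [Field k] [AddCommGroup M]
    [Module k M] (r : ℕ) (ζ : k) (T : M →ₗ[k] M) :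
    rstInvariant r ζ T = (∑ i ∈ range r, (i : ℚ) * finrank k (eigenspace T (ζ ^ i))) / r := by
  refine congrArg (· / _) (sum_congr rfl fun i _ ↦ ?_)
  rw [eigenspace_def, one_eq_id]

theorem rstInvariant_induced_general
    {k V : Type*} [Field k] [IsAlgClosed k]
    [AddCommGroup V] [Module k V] [FiniteDimensional k V]
    (r s : ℕ) [NeZero s] (hsr : s ∣ r) (hr : 0 < r)
    (ζ : k) (hζ : IsPrimitiveRoot ζ r)
    (S : V →ₗ[k] V) (hS : S ^ (r / s) = 1) :
    rstInvariant r ζ (inducedGenAction s S)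
      = rstInvariant (r / s) (ζ ^ s) S
        + ((s : ℚ) - 1) / 2 * (Module.finrank k V : ℚ) := by
  rw [rstInvariant_eq_sum_finrank_eigenspace, rstInvariant_eq_sum_finrank_eigenspace]
  set m := r / s
  have hsm : s * m = r := Nat.mul_div_cancel' hsr
  have : NeZero m := ⟨(Nat.div_pos (Nat.le_of_dvd hr hsr) (NeZero.pos s)).ne'⟩
  have hξ : IsPrimitiveRoot (ζ ^ s) m := hζ.pow hr hsm.symm
  set b : ℕ → ℚ := fun j ↦ finrank k (eigenspace S ((ζ ^ s) ^ j))
  have hb : Function.Periodic b m := fun j ↦ by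
    simp only [b]
    rw [pow_add, hξ.pow_eq_one, mul_one]
  have hinduced (i : ℕ) : (finrank k (eigenspace (inducedGenAction s S) (ζ ^ i)) : ℚ) = b i := by
    rw [finrank_eigenspace_inducedGenAction S s (pow_ne_zero i (hζ.ne_zero hr.ne')),
      pow_right_comm]
  have hdim : ∑ j ∈ range m, b j = finrank k V := by
    simp only [b]
    exact_mod_cast sum_finrank_eigenspace_pow_eq_finrank hξ hS
  simp only [hinduced, ← hsm, sum_range_mul_natCast_mul_of_periodic hb, hdim, sum_range_natCast_eq]
  have hm : (m : ℚ) ≠ 0 := NeZero.ne _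
  have hs : (s : ℚ) ≠ 0 := NeZero.ne _
  push_cast
  field_simp
  ring

/-- Lemma 8.6 (lem-induced).  Let `Γ = ⟨φ⟩` be cyclic of order `r`, `Δ = ⟨φ^s⟩` the
subgroup of index `s`, and `ζ` a primitive `r`-th root of unity (the value of the chosen
generator `γ` of the character group of `Γ` on `φ`; the generator `γ|_Δ` of the character
group of `Δ` sends `φ^s` to `ζ^s`).  For a finite-dimensional `Δ`-representation `(V, S)`
(so `S^{r/s} = 1`), the Reid–Shepherd-Barron–Tai invariants satisfy
`α_γ(V ⊗_{k[Δ]} k[Γ]) = α_{γ|_Δ}(V) + ((s−1)/2)·dim V`. -/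
theorem rstInvariant_induced
    {k V : Type*} [Field k] [IsAlgClosed k] [CharZero k]
    [AddCommGroup V] [Module k V] [FiniteDimensional k V]
    (r s : ℕ) [NeZero s] (hsr : s ∣ r) (hr : 0 < r)
    (ζ : k) (hζ : IsPrimitiveRoot ζ r)
    (S : V →ₗ[k] V) (hS : S ^ (r / s) = 1) :
    rstInvariant r ζ (inducedGenAction s S)
      = rstInvariant (r / s) (ζ ^ s) S
        + ((s : ℚ) - 1) / 2 * (Module.finrank k V : ℚ) :=
  rstInvariant_induced_general r s hsr hr ζ hζ S hS
end
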